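/- arXiv:2007.06875 — 2 statements merged into one kernel-verified Lean document; each statement's English description precedes it below -/
import Mathlib

section
/- Consider ẋ = [A(t) + Δ(t) + BK(t)]x on [t₀,∞), with A, Δ, K continuous matrix functions and B constant. If ∫_{t₀}^∞ |μ[Δ(s)]| ds < ∞ and limsup_{t→∞} ∫_{t₀}^t μ[A(s) + BK(s)] ds < ∞, then every solution is bounded on [t₀,∞) (i.e., the system is stable). -/
/-!
Along a solution of `ẋ = N(t) x`, the logarithmic norm bounds the upper right Dini derivative of
`‖x‖`: `D⁺‖x(t)‖ ≤ μ[N(t)] ‖x(t)‖`. Comparing `‖x‖` with the solutions of the scalar equation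
`y' = (μ[N(t)] + ε) y` gives Coppel's inequality `‖x(t)‖ ≤ ‖x(t₀)‖ exp ∫_{t₀}^t μ[N(s)] ds`.
With `N = (A + BK) + Δ`, subadditivity of `μ` bounds the exponent by `∫_{t₀}^t μ[A + BK]`, which is
bounded above on `[t₀, ∞)` (by hypothesis for large `t`, by compactness before), plus
`∫_{t₀}^∞ |μ[Δ]|`.
-/

open Filter Topology MeasureTheory Set

theorem hasDerivWithinAt_integral_Ici_of_continuousOn {m : ℝ → ℝ} {a b t : ℝ}
    (hm : ContinuousOn m (Icc a b)) (ht : t ∈ Ico a b) :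
    HasDerivWithinAt (fun u => ∫ s in a..u, m s) (m t) (Ici t) t := by
  have hmem : Icc a b ∈ 𝓝[>] t := Icc_mem_nhdsGT_of_mem ht
  refine intervalIntegral.integral_hasDerivWithinAt_right
    ((hm.mono (Icc_subset_Icc_right ht.2.le)).intervalIntegrable_of_Icc ht.1) ?_ ?_
  · exact (hm.stronglyMeasurableAtFilter_nhdsWithin measurableSet_Icc t).filter_mono
      (nhdsWithin_le_of_mem hmem)
  · exact (hm t (Ico_subset_Icc_self ht)).mono_of_mem_nhdsWithin hmem

theorem norm_le_mul_exp_integral_of_liminf_right_slope_norm_le {E : Type*}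
    [NormedAddCommGroup E] {x : ℝ → E} {m : ℝ → ℝ} {a b : ℝ} (hab : a ≤ b)
    (hm : ContinuousOn m (Icc a b)) (hx : ContinuousOn x (Icc a b))
    (hslope : ∀ t ∈ Ico a b, ∀ r, m t * ‖x t‖ < r → ∃ᶠ z in 𝓝[>] t, slope (norm ∘ x) t z < r) :
    ‖x b‖ ≤ ‖x a‖ * Real.exp (∫ s in a..b, m s) := by
  set G : ℝ → ℝ := fun u => ∫ s in a..u, m s
  have hGcont : ContinuousOn G (Icc a b) := by
    simpa [uIcc_of_le hab] using intervalIntegral.continuousOn_primitive_interval'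
      (hm.intervalIntegrable_of_Icc (μ := volume) hab) left_mem_uIcc
  -- Fence `x` by the strict supersolutions `(‖x a‖ + ε) exp (G t + ε (t - a))` and let `ε → 0`.
  set fence : ℝ → ℝ → ℝ := fun ε u => (‖x a‖ + ε) * Real.exp (G u + ε * (u - a))
  have hfence : ∀ ε > 0, ‖x b‖ ≤ fence ε b := by
    intro ε hε
    have hderiv : ∀ t ∈ Ico a b,
        HasDerivWithinAt (fence ε) ((m t + ε) * fence ε t) (Ici t) t := fun t ht => by
      refine ((((hasDerivWithinAt_integral_Ici_of_continuousOn hm ht).add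
        (((hasDerivWithinAt_id t _).sub_const a).const_mul ε)).exp).const_mul
          (‖x a‖ + ε)).congr_deriv ?_
      simp only [fence, G, Pi.add_apply, id]
      ring
    refine image_norm_le_of_liminf_right_slope_norm_lt_deriv_boundary hx hslope
      (by simpa only [fence, G, intervalIntegral.integral_same, sub_self, mul_zero, add_zero,
        Real.exp_zero, mul_one, le_add_iff_nonneg_right] using hε.le) ?_ hderiv ?_ ⟨hab, le_rfl⟩
    · fun_prop
    · intro t _ hxt
      have : 0 < fence ε t := by positivity
      rw [hxt]
      linarith [mul_pos hε this]
  have hlim : Tendsto (fun ε => fence ε b) (𝓝[>] 0) (𝓝 (‖x a‖ * Real.exp (G b))) := by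
    have : Continuous fun ε => fence ε b := by fun_prop
    simpa [fence] using (this.tendsto 0).mono_left nhdsWithin_le_nhds
  exact ge_of_tendsto hlim (eventually_nhdsWithin_of_forall hfence)

section LogarithmicNorm

variable {E : Type*} [NormedAddCommGroup E] [NormedSpace ℝ E]

def IsLogarithmicNorm (μ : (E →L[ℝ] E) → ℝ) : Prop :=
  ∀ M : E →L[ℝ] E,
    Tendsto (fun h : ℝ => (‖ContinuousLinearMap.id ℝ E + h • M‖ - 1) / h) (𝓝[>] 0) (𝓝 (μ M))

namespace IsLogarithmicNorm

variable {μ : (E →L[ℝ] E) → ℝ}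

theorem le_norm (hμ : IsLogarithmicNorm μ) (M : E →L[ℝ] E) : μ M ≤ ‖M‖ := by
  refine le_of_tendsto (hμ M) ?_
  filter_upwards [self_mem_nhdsWithin] with h (hh : 0 < h)
  rw [div_le_iff₀ hh]
  calc ‖ContinuousLinearMap.id ℝ E + h • M‖ - 1
      ≤ ‖ContinuousLinearMap.id ℝ E‖ + h * ‖M‖ - 1 := by
        grw [norm_add_le, norm_smul, Real.norm_of_nonneg hh.le]
    _ ≤ ‖M‖ * h := by linarith [ContinuousLinearMap.norm_id_le (𝕜 := ℝ) (E := E)]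

theorem add_le (hμ : IsLogarithmicNorm μ) (M N : E →L[ℝ] E) : μ (M + N) ≤ μ M + μ N := by
  have hdouble : Tendsto (fun h : ℝ => 2 * h) (𝓝[>] 0) (𝓝[>] 0) := by
    refine tendsto_nhdsWithin_of_tendsto_nhds_of_eventually_within _ ?_ ?_
    · simpa using (tendsto_id.const_mul (2 : ℝ)).mono_left (nhdsWithin_le_nhds (a := (0 : ℝ)))
    · filter_upwards [self_mem_nhdsWithin] with h (hh : 0 < h)
      exact mul_pos two_pos hh
  refine le_of_tendsto_of_tendsto (hμ (M + N))
    (((hμ M).comp hdouble).add ((hμ N).comp hdouble)) ?_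
  filter_upwards [self_mem_nhdsWithin] with h (hh : 0 < h)
  -- `I + h (M + N)` is the midpoint of `I + 2h M` and `I + 2h N`.
  have hmid : ContinuousLinearMap.id ℝ E + h • (M + N) =
      (2⁻¹ : ℝ) • (ContinuousLinearMap.id ℝ E + (2 * h) • M)
        + (2⁻¹ : ℝ) • (ContinuousLinearMap.id ℝ E + (2 * h) • N) := by
    module
  have hnorm : ‖ContinuousLinearMap.id ℝ E + h • (M + N)‖ ≤
      2⁻¹ * ‖ContinuousLinearMap.id ℝ E + (2 * h) • M‖
        + 2⁻¹ * ‖ContinuousLinearMap.id ℝ E + (2 * h) • N‖ := by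
    grw [hmid, norm_add_le, norm_smul, norm_smul,
      Real.norm_of_nonneg (by norm_num : (0 : ℝ) ≤ 2⁻¹)]
  simp only [Function.comp_apply]
  rw [← add_div, div_le_div_iff₀ hh (by positivity)]
  linarith [mul_le_mul_of_nonneg_left hnorm hh.le]

theorem lipschitzWith (hμ : IsLogarithmicNorm μ) : LipschitzWith 1 μ :=
  LipschitzWith.of_le_add_mul 1 fun M N => by
    have := hμ.add_le (M - N) N
    rw [sub_add_cancel] at this
    grw [this, hμ.le_norm, ← dist_eq_norm]
    simp [add_comm]

theorem continuous (hμ : IsLogarithmicNorm μ) : Continuous μ :=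
  hμ.lipschitzWith.continuous

theorem eventually_slope_norm_lt (hμ : IsLogarithmicNorm μ) {x : ℝ → E} {N : E →L[ℝ] E}
    {t r : ℝ} (hx : HasDerivWithinAt x (N (x t)) (Ioi t) t) (hr : μ N * ‖x t‖ < r) :
    ∀ᶠ z in 𝓝[>] t, slope (norm ∘ x) t z < r := by
  have hshift : Tendsto (fun z : ℝ => z - t) (𝓝[>] t) (𝓝[>] 0) := by
    refine tendsto_nhdsWithin_of_tendsto_nhds_of_eventually_within _ ?_ ?_
    · simpa using (tendsto_id.sub_const t).mono_left (nhdsWithin_le_nhds (a := t))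
    · filter_upwards [self_mem_nhdsWithin] with z (hz : t < z)
      exact sub_pos.2 hz
  have hslope : Tendsto (fun z => ‖slope x t z - N (x t)‖) (𝓝[>] t) (𝓝 0) := by
    simpa using
      ((hasDerivWithinAt_iff_tendsto_slope' self_notMem_Ioi).1 hx).sub_const (N (x t)) |>.norm
  have hlim := (((hμ N).comp hshift).mul_const ‖x t‖).add hslope
  rw [add_zero] at hlim
  filter_upwards [self_mem_nhdsWithin, (tendsto_order.1 hlim).2 r hr] with z (hz : t < z) hzr
  refine lt_of_le_of_lt ?_ hzr
  have hh : 0 < z - t := sub_pos.2 hz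
  have hsplit : x z = (ContinuousLinearMap.id ℝ E + (z - t) • N) (x t)
      + (z - t) • (slope x t z - N (x t)) := by
    simp [slope_def_module, smul_sub, smul_inv_smul₀ hh.ne']
  have hbound : ‖x z‖ ≤ ‖ContinuousLinearMap.id ℝ E + (z - t) • N‖ * ‖x t‖
      + (z - t) * ‖slope x t z - N (x t)‖ := by
    grw [hsplit, norm_add_le, ContinuousLinearMap.le_opNorm, norm_smul, Real.norm_of_nonneg hh.le]
  simp only [slope_def_field, Function.comp_apply]
  rw [div_le_iff₀ hh, add_mul, mul_right_comm, div_mul_cancel₀ _ hh.ne']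
  linarith

theorem norm_le_mul_exp_integral (hμ : IsLogarithmicNorm μ) {x : ℝ → E} {N : ℝ → E →L[ℝ] E}
    {a b : ℝ} (hab : a ≤ b) (hN : ContinuousOn N (Icc a b)) (hx : ContinuousOn x (Icc a b))
    (hx' : ∀ t ∈ Ico a b, HasDerivWithinAt x (N t (x t)) (Ici t) t) :
    ‖x b‖ ≤ ‖x a‖ * Real.exp (∫ s in a..b, μ (N s)) :=
  norm_le_mul_exp_integral_of_liminf_right_slope_norm_le hab
    (hμ.continuous.comp_continuousOn hN) hx fun t ht _ hr =>
      (hμ.eventually_slope_norm_lt ((hx' t ht).mono Ioi_subset_Ici_self) hr).frequently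

theorem integral_add_le (hμ : IsLogarithmicNorm μ) {f g : ℝ → E →L[ℝ] E} {a b : ℝ}
    (hab : a ≤ b) (hf : ContinuousOn f (Icc a b)) (hg : ContinuousOn g (Icc a b)) :
    ∫ s in a..b, μ (f s + g s) ≤ (∫ s in a..b, μ (f s)) + ∫ s in a..b, |μ (g s)| := by
  have hint {φ : ℝ → E →L[ℝ] E} (hφ : ContinuousOn φ (Icc a b)) :
      IntervalIntegrable (fun s => μ (φ s)) volume a b :=
    (hμ.continuous.comp_continuousOn hφ).intervalIntegrable_of_Icc hab
  rw [← intervalIntegral.integral_add (hint hf) (hint hg).abs]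
  refine intervalIntegral.integral_mono_on hab (hint (hf.add hg)) ((hint hf).add (hint hg).abs)
    fun s _ => ?_
  grw [hμ.add_le, ← le_abs_self (μ (g s))]

end IsLogarithmicNorm

end LogarithmicNorm

theorem bddAbove_image_Ici_of_eventually_le {f : ℝ → ℝ} {a C : ℝ}
    (hf : ∀ b ≥ a, BddAbove (f '' Icc a b)) (hC : ∀ᶠ t in atTop, f t ≤ C) :
    BddAbove (f '' Ici a) := by
  obtain ⟨T, hT⟩ := eventually_atTop.1 ((eventually_ge_atTop a).and hC)
  refine ((hf T (hT T le_rfl).1).union (t := f '' Ici T) (bddAbove_def.2 ⟨C, ?_⟩)).mono ?_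
  · exact fun y ⟨t, ht, hy⟩ => hy ▸ (hT t ht).2
  · rw [← image_union]
    exact image_mono fun t ht => (le_total t T).imp (fun h => ⟨ht, h⟩) id

/-- for `ẋ = [A(t) + Δ(t) + BK(t)]x` on `[t₀,∞)`, if
`∫_{t₀}^∞ |μ[Δ(s)]| ds < ∞` and `limsup_{t→∞} ∫_{t₀}^t μ[A(s)+BK(s)] ds < ∞`
(i.e. the integrals are eventually bounded above by some constant `C`),
then every solution is bounded on `[t₀,∞)` (stability). -/
theorem stmt10 {E : Type*} [NormedAddCommGroup E] [NormedSpace ℝ E]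
    (t₀ : ℝ) (A Δ K : ℝ → (E →L[ℝ] E)) (B : E →L[ℝ] E)
    (hA : ContinuousOn A (Set.Ici t₀)) (hΔ : ContinuousOn Δ (Set.Ici t₀))
    (hK : ContinuousOn K (Set.Ici t₀))
    (μ : (E →L[ℝ] E) → ℝ)
    (hμ : ∀ M : E →L[ℝ] E,
      Tendsto (fun h : ℝ => (‖ContinuousLinearMap.id ℝ E + h • M‖ - 1) / h)
        (𝓝[>] 0) (𝓝 (μ M)))
    (hA1 : IntegrableOn (fun s => |μ (Δ s)|) (Set.Ici t₀))
    (hA2 : ∃ C : ℝ, ∀ᶠ t in atTop, (∫ s in t₀..t, μ (A s + B ∘L K s)) ≤ C) :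
    ∀ x : ℝ → E, (∀ t ≥ t₀, HasDerivAt x ((A t + Δ t + B ∘L K t) (x t)) t) →
      ∃ M : ℝ, ∀ t ≥ t₀, ‖x t‖ ≤ M := by
  intro x hx
  have hμ : IsLogarithmicNorm μ := hμ
  have hF : ContinuousOn (fun s => A s + B ∘L K s) (Ici t₀) :=
    hA.add (continuousOn_const.clm_comp hK)
  obtain ⟨C, hC⟩ : BddAbove ((fun t => ∫ s in t₀..t, μ (A s + B ∘L K s)) '' Ici t₀) := by
    obtain ⟨C, hC⟩ := hA2
    refine bddAbove_image_Ici_of_eventually_le (fun b hb => ?_) hC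
    refine isCompact_Icc.bddAbove_image ?_
    simpa [uIcc_of_le hb] using intervalIntegral.continuousOn_primitive_interval'
      ((hμ.continuous.comp_continuousOn (hF.mono Icc_subset_Ici_self)).intervalIntegrable_of_Icc
        (μ := volume) hb) left_mem_uIcc
  refine ⟨‖x t₀‖ * Real.exp (C + ∫ s in Ici t₀, |μ (Δ s)|), fun t ht => ?_⟩
  have hsub : Icc t₀ t ⊆ Ici t₀ := Icc_subset_Ici_self
  have hcoppel := hμ.norm_le_mul_exp_integral ht (N := fun s => A s + B ∘L K s + Δ s)
    (hF.add hΔ |>.mono hsub) (fun s hs => (hx s hs.1).continuousAt.continuousWithinAt)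
    (fun s hs => by simpa only [add_right_comm (A s)] using (hx s hs.1).hasDerivWithinAt)
  have hperturb := hμ.integral_add_le ht (hF.mono hsub) (hΔ.mono hsub)
  have htail : ∫ s in t₀..t, |μ (Δ s)| ≤ ∫ s in Ici t₀, |μ (Δ s)| := by
    rw [intervalIntegral.integral_of_le ht]
    exact setIntegral_mono_set hA1 (.of_forall fun _ => abs_nonneg _)
      (Ioc_subset_Icc_self.trans hsub).eventuallyLE
  grw [hcoppel, hperturb, htail,
    (hC ⟨t, ht, rfl⟩ : ∫ s in t₀..t, μ (A s + B ∘L K s) ≤ C)]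
end

section
/- Consider ẋ = [A(t) + Δ(t) + BK(t)]x + ω(x,t) on [t₀,∞), with A, Δ, K continuous, B constant, and ω continuous. Assume (A1) ∫_{t₀}^∞ |μ[Δ(s)]| ds < ∞; (A2) μ[A(t)+BK(t)] < 0 for all sufficiently large t; (A3) there is a continuous function ω̃ with ‖ω(x,t)‖ ≤ ‖ω̃(t)‖ for all x, t and ‖ω̃(t)‖/μ[A(t)+BK(t)] → 0 as t → ∞; (A4) ∫_{t₀}^t μ[A(s)+BK(s)] ds → −∞. Then every solution x(t) satisfies x(t) → 0 as t → ∞. -/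
open Filter Topology MeasureTheory Set Real

/-!
Along a solution, subadditivity of the logarithmic norm bounds the upper right Dini derivative
of `‖x t‖` by `(g + q) ‖x‖ + w`, where `g = μ[A + BK]` and `q = |μ[Δ]|`. Comparison with the
solution of the scalar linear equation gives
`‖x t‖ ≤ exp (∫ q) * (exp (P t) * ‖x t₀‖ + exp (P t) * ∫_{t₀}^t exp (-P s) * w s ds)`
with `P = ∫ g`. The factor `exp (∫ q)` is bounded by (A1) and `exp (P t) → 0` by (A4). Since
`w ≤ ε (-g)` eventually, by (A2) and (A3), and `exp (-P s) * (-g s)` is the derivative of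
`exp (-P s)`, the tail of the last integral is at most `ε exp (-P t)`.
-/
def IsLogNorm {E : Type*} [NormedAddCommGroup E] [NormedSpace ℝ E]
    (μ : (E →L[ℝ] E) → ℝ) : Prop :=
  ∀ M : E →L[ℝ] E,
    Tendsto (fun h : ℝ => (‖ContinuousLinearMap.id ℝ E + h • M‖ - 1) / h) (𝓝[>] 0) (𝓝 (μ M))

namespace IsLogNorm

variable {E : Type*} [NormedAddCommGroup E] [NormedSpace ℝ E] {μ : (E →L[ℝ] E) → ℝ}

local notation "𝟙" => ContinuousLinearMap.id ℝ E

theorem le_add_norm_sub (hμ : IsLogNorm μ) (M N : E →L[ℝ] E) : μ M ≤ μ N + ‖M - N‖ := by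
  refine le_of_tendsto_of_tendsto (hμ M) ((hμ N).add_const ‖M - N‖) ?_
  filter_upwards [self_mem_nhdsWithin] with h (hh : 0 < h)
  have : ‖𝟙 + h • M‖ ≤ ‖𝟙 + h • N‖ + h * ‖M - N‖ :=
    calc ‖𝟙 + h • M‖ = ‖(𝟙 + h • N) + h • (M - N)‖ := by rw [smul_sub]; abel_nf
      _ ≤ ‖𝟙 + h • N‖ + ‖h • (M - N)‖ := norm_add_le _ _
      _ = ‖𝟙 + h • N‖ + h * ‖M - N‖ := by rw [norm_smul, norm_of_nonneg hh.le]
  rw [div_add' _ _ _ hh.ne', div_le_div_iff_of_pos_right hh]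
  linarith

theorem lipschitzWith (hμ : IsLogNorm μ) : LipschitzWith 1 μ :=
  LipschitzWith.of_le_add fun M N => by
    simpa only [dist_eq_norm] using hμ.le_add_norm_sub M N

theorem add_le (hμ : IsLogNorm μ) (M N : E →L[ℝ] E) : μ (M + N) ≤ μ M + μ N := by
  have h2 : Tendsto (fun h : ℝ => 2 * h) (𝓝[>] 0) (𝓝[>] 0) :=
    tendsto_iff_comap.2 (comap_mulLeft_nhdsGT_zero two_pos).ge
  refine le_of_tendsto_of_tendsto (hμ (M + N)) (((hμ M).comp h2).add ((hμ N).comp h2)) ?_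
  filter_upwards [self_mem_nhdsWithin] with h (hh : 0 < h)
  have : 2 * ‖𝟙 + h • (M + N)‖ ≤ ‖𝟙 + (2 * h) • M‖ + ‖𝟙 + (2 * h) • N‖ := by
    calc 2 * ‖𝟙 + h • (M + N)‖ = ‖(2 : ℝ) • (𝟙 + h • (M + N))‖ := by
          rw [norm_smul, norm_two]
      _ = ‖(𝟙 + (2 * h) • M) + (𝟙 + (2 * h) • N)‖ := by congr 1; module
      _ ≤ _ := norm_add_le _ _
  simp only [Function.comp_apply]
  rw [← add_div, div_le_div_iff₀ hh (by positivity)]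
  nlinarith

theorem eventually_slope_norm_lt (hμ : IsLogNorm μ) {x : ℝ → E} {t : ℝ} {M : E →L[ℝ] E}
    {v : E} (hx : HasDerivAt x (M (x t) + v) t) {r : ℝ} (hr : μ M * ‖x t‖ + ‖v‖ < r) :
    ∀ᶠ z in 𝓝[>] t, slope (fun s => ‖x s‖) t z < r := by
  set o : ℝ → E := fun z => x z - x t - (z - t) • (M (x t) + v)
  have ho : Tendsto (fun z => ‖o z‖ / (z - t)) (𝓝[>] t) (𝓝 0) :=
    hx.isLittleO.norm_left.tendsto_div_nhds_zero.mono_left nhdsWithin_le_nhds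
  have hsub : Tendsto (fun z => z - t) (𝓝[>] t) (𝓝[>] 0) := by
    refine tendsto_nhdsWithin_iff.2
      ⟨?_, eventually_mem_nhdsWithin.mono fun z hz => sub_pos.2 (mem_Ioi.1 hz)⟩
    simpa using (tendsto_id.sub_const t).mono_left (nhdsWithin_le_nhds (a := t) (s := Ioi t))
  set φ : ℝ → ℝ := fun z => (‖𝟙 + (z - t) • M‖ - 1) / (z - t) * ‖x t‖ + ‖v‖ + ‖o z‖ / (z - t)
  have hφ : Tendsto φ (𝓝[>] t) (𝓝 (μ M * ‖x t‖ + ‖v‖ + 0)) :=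
    ((((hμ M).comp hsub).mul_const _).add_const _).add ho
  rw [add_zero] at hφ
  filter_upwards [hφ.eventually_lt_const hr, self_mem_nhdsWithin] with z hz (htz : t < z)
  refine lt_of_le_of_lt ?_ hz
  have hh : 0 < z - t := sub_pos.2 htz
  have hxz : ‖x z‖ ≤ ‖𝟙 + (z - t) • M‖ * ‖x t‖ + (z - t) * ‖v‖ + ‖o z‖ :=
    calc ‖x z‖ = ‖(𝟙 + (z - t) • M) (x t) + (z - t) • v + o z‖ := by
          congr 1; simp only [o, add_apply, ContinuousLinearMap.id_apply,
            smul_apply, smul_add]; abel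
      _ ≤ ‖(𝟙 + (z - t) • M) (x t)‖ + ‖(z - t) • v‖ + ‖o z‖ := norm_add₃_le
      _ ≤ ‖𝟙 + (z - t) • M‖ * ‖x t‖ + (z - t) * ‖v‖ + ‖o z‖ := by
          rw [norm_smul, norm_of_nonneg hh.le]
          gcongr
          exact ContinuousLinearMap.le_opNorm _ _
  rw [slope_def_field]
  simp only [φ]
  rw [div_mul_eq_mul_div, div_add' _ _ _ hh.ne', ← add_div, div_le_div_iff_of_pos_right hh]
  linarith

end IsLogNorm

theorem le_exp_mul_of_liminf_slope_right_le {u u' k K f : ℝ → ℝ} {a b : ℝ} (hab : a ≤ b)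
    (hK : ∀ t, HasDerivAt K (k t) t) (hf : Continuous f) (hu : ContinuousOn u (Icc a b))
    (hu' : ∀ t ∈ Ico a b, ∀ r, u' t < r → ∃ᶠ z in 𝓝[>] t, slope u t z < r)
    (bound : ∀ t ∈ Ico a b, u' t ≤ k t * u t + f t) :
    u b ≤ exp (K b) * (exp (-K a) * u a + ∫ s in a..b, exp (-K s) * f s) := by
  have hKc : Continuous K := continuous_iff_continuousAt.2 fun t => (hK t).continuousAt
  set c := exp (-K a) * u a
  set B : ℝ → ℝ → ℝ := fun ε t => exp (K t) * (c + ∫ s in a..t, exp (-K s) * (f s + ε))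
  -- the extra `ε` makes `B ε` grow strictly faster than `u` wherever the two touch
  have hB : ∀ ε > 0, u b ≤ B ε b := by
    intro ε hε
    have hBd : ∀ t, HasDerivAt (B ε) (k t * B ε t + (f t + ε)) t := by
      intro t
      have hint : Continuous fun s => exp (-K s) * (f s + ε) := by fun_prop
      refine ((hK t).exp.mul
        ((hint.integral_hasStrictDerivAt a t).hasDerivAt.const_add c)).congr_deriv ?_
      simp only [B, exp_neg]
      field_simp
    refine image_le_of_liminf_slope_right_lt_deriv_boundary hu hu' ?_ hBd
      (fun t ht hut => ?_) ⟨hab, le_rfl⟩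
    · simp [B, c, ← mul_assoc, ← exp_add]
    · rw [← hut]
      linarith [bound t ht]
  have hBc : Continuous fun ε => B ε b := by
    have : Continuous fun p : ℝ × ℝ => exp (-K p.2) * (f p.2 + p.1) := by fun_prop
    exact continuous_const.mul (continuous_const.add
      (intervalIntegral.continuous_parametric_intervalIntegral_of_continuous' this a b))
  have hlim : u b ≤ B 0 b :=
    ge_of_tendsto ((hBc.tendsto 0).mono_left (nhdsWithin_le_nhds (s := Ioi 0)))
      (eventually_mem_nhdsWithin.mono fun ε (hε : 0 < ε) => hB ε hε)
  simpa [B] using hlim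

theorem tendsto_exp_mul_integral_exp_neg_mul {g P f : ℝ → ℝ} (a : ℝ)
    (hP : ∀ t, HasDerivAt P (g t) t) (hg : Continuous g) (hf : Continuous f)
    (hP_bot : Tendsto P atTop atBot) (hg_neg : ∀ᶠ t in atTop, g t < 0)
    (hfg : Tendsto (fun t => f t / g t) atTop (𝓝 0)) :
    Tendsto (fun t => exp (P t) * ∫ s in a..t, exp (-P s) * f s) atTop (𝓝 0) := by
  have hPc : Continuous P := continuous_iff_continuousAt.2 fun t => (hP t).continuousAt
  have hint : ∀ c d, IntervalIntegrable (fun s => exp (-P s) * f s) volume c d :=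
    fun c d => (by fun_prop : Continuous fun s => exp (-P s) * f s).intervalIntegrable c d
  have hexpP : Tendsto (fun t => exp (P t)) atTop (𝓝 0) := tendsto_exp_atBot.comp hP_bot
  rw [NormedAddGroup.tendsto_nhds_zero]
  intro ε hε
  obtain ⟨T, hT⟩ : ∃ T, ∀ s ≥ T, |f s| ≤ ε / 2 * -g s := by
    refine eventually_atTop.1 ?_
    filter_upwards [hg_neg, NormedAddGroup.tendsto_nhds_zero.1 hfg (ε / 2) (by positivity)]
      with s hgs hfgs
    rw [norm_eq_abs, abs_div, abs_of_neg hgs, div_lt_iff₀ (neg_pos.2 hgs)] at hfgs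
    exact hfgs.le
  have htail : ∀ t ≥ T, |∫ s in T..t, exp (-P s) * f s| ≤ ε / 2 * exp (-P t) := by
    intro t ht
    have hFTC : ∫ s in T..t, exp (-P s) * -g s = exp (-P t) - exp (-P T) :=
      intervalIntegral.integral_eq_sub_of_hasDerivAt (fun s _ => (hP s).neg.exp)
        ((by fun_prop : Continuous fun s => exp (-P s) * -g s).intervalIntegrable T t)
    calc |∫ s in T..t, exp (-P s) * f s| ≤ ∫ s in T..t, |exp (-P s) * f s| :=
          intervalIntegral.abs_integral_le_integral_abs ht
      _ ≤ ∫ s in T..t, ε / 2 * (exp (-P s) * -g s) := by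
          refine intervalIntegral.integral_mono_on ht (hint T t).abs
            ((by fun_prop : Continuous fun s => ε / 2 * (exp (-P s) * -g s)).intervalIntegrable
              T t) fun s hs => ?_
          rw [abs_mul, abs_of_pos (exp_pos _), mul_left_comm]
          exact mul_le_mul_of_nonneg_left (hT s hs.1) (exp_pos _).le
      _ = ε / 2 * (exp (-P t) - exp (-P T)) := by rw [intervalIntegral.integral_const_mul, hFTC]
      _ ≤ ε / 2 * exp (-P t) := by have := exp_pos (-P T); nlinarith
  have hhead : ∀ᶠ t in atTop, exp (P t) * |∫ s in a..T, exp (-P s) * f s| < ε / 2 := by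
    have h := hexpP.mul_const |∫ s in a..T, exp (-P s) * f s|
    rw [zero_mul] at h
    exact h.eventually_lt_const (half_pos hε)
  filter_upwards [hhead, eventually_ge_atTop T] with t hhead_t ht
  rw [← intervalIntegral.integral_add_adjacent_intervals (hint a T) (hint T t), norm_mul,
    norm_of_nonneg (exp_pos _).le, norm_eq_abs]
  calc exp (P t) * |(∫ s in a..T, exp (-P s) * f s) + ∫ s in T..t, exp (-P s) * f s|
      ≤ exp (P t) * |∫ s in a..T, exp (-P s) * f s|
        + exp (P t) * |∫ s in T..t, exp (-P s) * f s| := by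
        rw [← mul_add]; exact mul_le_mul_of_nonneg_left (abs_add_le _ _) (exp_pos _).le
    _ < ε / 2 + exp (P t) * (ε / 2 * exp (-P t)) :=
        add_lt_add_of_lt_of_le hhead_t (mul_le_mul_of_nonneg_left (htail t ht) (exp_pos _).le)
    _ = ε := by rw [mul_left_comm, ← exp_add, add_neg_cancel, exp_zero]; ring

theorem tendsto_zero_of_liminf_slope_right_le_of_continuous {u u' g q f : ℝ → ℝ} {a : ℝ}
    (hg : Continuous g) (hq : Continuous q) (hf : Continuous f)
    (hu : ContinuousOn u (Ici a)) (hu0 : ∀ t ≥ a, 0 ≤ u t)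
    (hu' : ∀ t ≥ a, ∀ r, u' t < r → ∃ᶠ z in 𝓝[>] t, slope u t z < r)
    (bound : ∀ t ≥ a, u' t ≤ (g t + q t) * u t + f t)
    (hq0 : ∀ t ≥ a, 0 ≤ q t) (hq_int : IntegrableOn q (Ici a)) (hf0 : ∀ t ≥ a, 0 ≤ f t)
    (hg_neg : ∀ᶠ t in atTop, g t < 0) (hfg : Tendsto (fun t => f t / g t) atTop (𝓝 0))
    (hG : Tendsto (fun t => ∫ s in a..t, g s) atTop atBot) :
    Tendsto u atTop (𝓝 0) := by
  set P := fun t => ∫ s in a..t, g s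
  set Q := fun t => ∫ s in a..t, q s
  have hP : ∀ t, HasDerivAt P (g t) t := fun t => (hg.integral_hasStrictDerivAt a t).hasDerivAt
  have hQ : ∀ t, HasDerivAt Q (q t) t := fun t => (hq.integral_hasStrictDerivAt a t).hasDerivAt
  have hQ0 : ∀ t ≥ a, 0 ≤ Q t := fun t ht =>
    intervalIntegral.integral_nonneg ht fun s hs => hq0 s hs.1
  set C := ∫ s in Ici a, q s
  have hQC : ∀ t ≥ a, Q t ≤ C := fun t ht => by
    simp only [Q]
    rw [intervalIntegral.integral_of_le ht]
    exact setIntegral_mono_set hq_int ((ae_restrict_iff' measurableSet_Ici).2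
      (Eventually.of_forall hq0))
      (LE.le.eventuallyLE (Ioc_subset_Ioi_self.trans Ioi_subset_Ici_self))
  have hbound : ∀ t ≥ a,
      u t ≤ exp C * (exp (P t) * u a + exp (P t) * ∫ s in a..t, exp (-P s) * f s) := by
    intro t ht
    have hgron := le_exp_mul_of_liminf_slope_right_le (K := fun s => P s + Q s) ht
      (fun s => (hP s).add (hQ s)) hf (hu.mono Icc_subset_Ici_self) (fun s hs => hu' s hs.1)
      (fun s hs => bound s hs.1)
    have hPc : Continuous P := continuous_iff_continuousAt.2 fun s => (hP s).continuousAt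
    have hQc : Continuous Q := continuous_iff_continuousAt.2 fun s => (hQ s).continuousAt
    have hPQa : P a + Q a = 0 := by simp [P, Q]
    rw [hPQa, neg_zero, exp_zero, one_mul] at hgron
    have hI0 : 0 ≤ ∫ s in a..t, exp (-(P s + Q s)) * f s :=
      intervalIntegral.integral_nonneg ht fun s hs => mul_nonneg (exp_pos _).le (hf0 s hs.1)
    have hI : ∫ s in a..t, exp (-(P s + Q s)) * f s ≤ ∫ s in a..t, exp (-P s) * f s :=
      intervalIntegral.integral_mono_on ht (Continuous.intervalIntegrable (by fun_prop) _ _)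
        (Continuous.intervalIntegrable (by fun_prop) _ _) fun s hs =>
        mul_le_mul_of_nonneg_right (exp_le_exp.2 (by linarith [hQ0 s hs.1])) (hf0 s hs.1)
    calc u t ≤ exp (P t + Q t) * (u a + ∫ s in a..t, exp (-(P s + Q s)) * f s) := hgron
      _ ≤ exp (C + P t) * (u a + ∫ s in a..t, exp (-P s) * f s) :=
          mul_le_mul (exp_le_exp.2 (by linarith [hQC t ht])) (by linarith)
            (by linarith [hu0 a le_rfl]) (exp_pos _).le
      _ = _ := by rw [exp_add]; ring
  have hlim : Tendsto
      (fun t => exp C * (exp (P t) * u a + exp (P t) * ∫ s in a..t, exp (-P s) * f s))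
      atTop (𝓝 0) := by
    simpa using (((tendsto_exp_atBot.comp hG).mul_const (u a)).add
      (tendsto_exp_mul_integral_exp_neg_mul a hP hg hf hG hg_neg hfg)).const_mul (exp C)
  exact squeeze_zero' ((eventually_ge_atTop a).mono hu0) ((eventually_ge_atTop a).mono hbound) hlim

theorem ContinuousOn.continuous_comp_max {α : Type*} [TopologicalSpace α] {f : ℝ → α} {a : ℝ}
    (hf : ContinuousOn f (Ici a)) : Continuous fun t => f (max t a) :=
  hf.comp_continuous (continuous_id.max continuous_const) fun t => le_max_right t a

theorem tendsto_zero_of_liminf_slope_right_le {u u' g q f : ℝ → ℝ} {a : ℝ}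
    (hg : ContinuousOn g (Ici a)) (hq : ContinuousOn q (Ici a)) (hf : ContinuousOn f (Ici a))
    (hu : ContinuousOn u (Ici a)) (hu0 : ∀ t ≥ a, 0 ≤ u t)
    (hu' : ∀ t ≥ a, ∀ r, u' t < r → ∃ᶠ z in 𝓝[>] t, slope u t z < r)
    (bound : ∀ t ≥ a, u' t ≤ (g t + q t) * u t + f t)
    (hq0 : ∀ t ≥ a, 0 ≤ q t) (hq_int : IntegrableOn q (Ici a)) (hf0 : ∀ t ≥ a, 0 ≤ f t)
    (hg_neg : ∀ᶠ t in atTop, g t < 0) (hfg : Tendsto (fun t => f t / g t) atTop (𝓝 0))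
    (hG : Tendsto (fun t => ∫ s in a..t, g s) atTop atBot) :
    Tendsto u atTop (𝓝 0) := by
  have hmax : ∀ t ≥ a, max t a = t := fun t ht => max_eq_left ht
  refine tendsto_zero_of_liminf_slope_right_le_of_continuous hg.continuous_comp_max
    hq.continuous_comp_max hf.continuous_comp_max hu hu0 hu'
    (fun t ht => by simpa only [hmax t ht] using bound t ht) (fun t _ => hq0 _ (le_max_right t a))
    (hq_int.congr_fun (fun t ht => by rw [hmax t ht]) measurableSet_Ici)
    (fun t _ => hf0 _ (le_max_right t a)) ?_ ?_ ?_
  · filter_upwards [hg_neg, eventually_ge_atTop a] with t hgt ht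
    rwa [hmax t ht]
  · refine hfg.congr' ?_
    filter_upwards [eventually_ge_atTop a] with t ht
    rw [hmax t ht]
  · refine hG.congr' ?_
    filter_upwards [eventually_ge_atTop a] with t ht
    refine intervalIntegral.integral_congr fun s hs => ?_
    rw [uIcc_of_le ht] at hs
    rw [hmax s hs.1]

theorem stmt15_general {E : Type*} [NormedAddCommGroup E] [NormedSpace ℝ E]
    (t₀ : ℝ) (A Δ K : ℝ → (E →L[ℝ] E)) (B : E →L[ℝ] E)
    (hA : ContinuousOn A (Set.Ici t₀)) (hΔ : ContinuousOn Δ (Set.Ici t₀))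
    (hK : ContinuousOn K (Set.Ici t₀))
    (ω : E → ℝ → E)
    (μ : (E →L[ℝ] E) → ℝ)
    (hμ : ∀ M : E →L[ℝ] E,
      Tendsto (fun h : ℝ => (‖ContinuousLinearMap.id ℝ E + h • M‖ - 1) / h)
        (𝓝[>] 0) (𝓝 (μ M)))
    (hA1 : IntegrableOn (fun s => |μ (Δ s)|) (Set.Ici t₀))
    (hA2 : ∀ᶠ t in atTop, μ (A t + B ∘L K t) < 0)
    (w : ℝ → ℝ) (hw : ContinuousOn w (Set.Ici t₀))
    (hA3bound : ∀ (x : E), ∀ t ≥ t₀, ‖ω x t‖ ≤ w t)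
    (hA3lim : Tendsto (fun t => w t / μ (A t + B ∘L K t)) atTop (𝓝 0))
    (hA4 : Tendsto (fun t => ∫ s in t₀..t, μ (A s + B ∘L K s)) atTop atBot) :
    ∀ x : ℝ → E,
      (∀ t ≥ t₀, HasDerivAt x ((A t + Δ t + B ∘L K t) (x t) + ω (x t) t) t) →
      Tendsto x atTop (𝓝 0) := by
  intro x hx
  have hμ : IsLogNorm μ := hμ
  have hμc : Continuous μ := hμ.lipschitzWith.continuous
  have hμ_le : ∀ t, μ (A t + Δ t + B ∘L K t) ≤ μ (A t + B ∘L K t) + |μ (Δ t)| := fun t =>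
    calc μ (A t + Δ t + B ∘L K t) = μ ((A t + B ∘L K t) + Δ t) := by rw [add_right_comm]
      _ ≤ μ (A t + B ∘L K t) + μ (Δ t) := hμ.add_le _ _
      _ ≤ μ (A t + B ∘L K t) + |μ (Δ t)| := add_le_add_right (le_abs_self _) _
  refine tendsto_zero_iff_norm_tendsto_zero.2 <| tendsto_zero_of_liminf_slope_right_le
    (u' := fun t => μ (A t + Δ t + B ∘L K t) * ‖x t‖ + ‖ω (x t) t‖)
    (hμc.comp_continuousOn (hA.add (continuousOn_const.clm_comp hK)))
    (continuous_abs.comp_continuousOn (hμc.comp_continuousOn hΔ)) hw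
    (fun t ht => (hx t ht).continuousAt.norm.continuousWithinAt) (fun t _ => norm_nonneg _)
    (fun t ht r hr => (hμ.eventually_slope_norm_lt (hx t ht) hr).frequently)
    (fun t ht => add_le_add (mul_le_mul_of_nonneg_right (hμ_le t) (norm_nonneg _))
      (hA3bound _ t ht))
    (fun t _ => abs_nonneg _) hA1 (fun t ht => (norm_nonneg _).trans (hA3bound 0 t ht))
    hA2 hA3lim hA4

/-- Theorem 3 of the paper: consider
`ẋ = [A(t) + Δ(t) + BK(t)]x + ω(x,t)` on `[t₀,∞)`. Assume
(A1) `∫_{t₀}^∞ |μ[Δ(s)]| ds < ∞`;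
(A2) `μ[A(t)+BK(t)] < 0` for all sufficiently large `t`;
(A3) `‖ω(x,t)‖ ≤ w(t)` for all `x, t` with `w` continuous and `w(t)/μ[A(t)+BK(t)] → 0`;
(A4) `∫_{t₀}^t μ[A(s)+BK(s)] ds → −∞`.
Then every solution converges to `0` as `t → ∞`. -/
theorem stmt15 {E : Type*} [NormedAddCommGroup E] [NormedSpace ℝ E]
    (t₀ : ℝ) (A Δ K : ℝ → (E →L[ℝ] E)) (B : E →L[ℝ] E)
    (hA : ContinuousOn A (Set.Ici t₀)) (hΔ : ContinuousOn Δ (Set.Ici t₀))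
    (hK : ContinuousOn K (Set.Ici t₀))
    (ω : E → ℝ → E) (hω : Continuous fun p : E × ℝ => ω p.1 p.2)
    (μ : (E →L[ℝ] E) → ℝ)
    (hμ : ∀ M : E →L[ℝ] E,
      Tendsto (fun h : ℝ => (‖ContinuousLinearMap.id ℝ E + h • M‖ - 1) / h)
        (𝓝[>] 0) (𝓝 (μ M)))
    (hA1 : IntegrableOn (fun s => |μ (Δ s)|) (Set.Ici t₀))
    (hA2 : ∀ᶠ t in atTop, μ (A t + B ∘L K t) < 0)
    (w : ℝ → ℝ) (hw : ContinuousOn w (Set.Ici t₀))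
    (hA3bound : ∀ (x : E), ∀ t ≥ t₀, ‖ω x t‖ ≤ w t)
    (hA3lim : Tendsto (fun t => w t / μ (A t + B ∘L K t)) atTop (𝓝 0))
    (hA4 : Tendsto (fun t => ∫ s in t₀..t, μ (A s + B ∘L K s)) atTop atBot) :
    ∀ x : ℝ → E,
      (∀ t ≥ t₀, HasDerivAt x ((A t + Δ t + B ∘L K t) (x t) + ω (x t) t) t) →
      Tendsto x atTop (𝓝 0) :=
  stmt15_general t₀ A Δ K B hA hΔ hK ω μ hμ hA1 hA2 w hw hA3bound hA3lim hA4
end
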